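/- arXiv:2511.07309 — 5 statements merged into one kernel-verified Lean document; each statement's English description precedes it below -/
import Mathlib

section
/- Let ς > 1, σ > 0 and ω > 0 be real numbers. Define the detection error probability function f : ℝ → ℝ by f(τ) = 1 − (log τ − log (max (τ − ω) (σ/ς))) / (2 · log ς). Then for every τ with σ/ς ≤ τ ≤ ς·σ one has f(τ) ≥ f(τ*), where τ* = min (ω + σ/ς) (ς·σ); that is, τ* minimizes f over the interval [σ/ς, ς·σ]. -/
/-!
Write `a = σ / ς` and `g τ = log τ - log (max (τ - ω) a)`, so that `f = 1 - g / (2 log ς)`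
and minimizing `f` means maximizing `g`. The ratio `τ / max (τ - ω) a` is at most `τ / a`, and
for `τ ≥ ω + a` it is `τ / (τ - ω) ≤ (ω + a) / a`; hence `g τ ≤ log (min τ (ω + a)) - log a`,
with equality for `τ ≤ ω + a`. On `[a, ς σ]` this bound is largest at `τ = min (ω + a) (ς σ)`,
where it is attained.
-/

namespace Real

theorem log_sub_log_max_sub_le {a ω τ : ℝ} (ha : 0 < a) (hω : 0 ≤ ω) (hτ : 0 < τ) :
    log τ - log (max (τ - ω) a) ≤ log (min τ (ω + a)) - log a := by
  rcases le_total τ (ω + a) with hle | hge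
  · rw [min_eq_left hle]
    have : log a ≤ log (max (τ - ω) a) := log_le_log ha (le_max_right _ _)
    linarith
  · rw [min_eq_right hge, max_eq_left (by linarith)]
    have hτω : 0 < τ - ω := by linarith
    have hprod : τ * a ≤ (ω + a) * (τ - ω) := by nlinarith
    have := log_le_log (by positivity) hprod
    rw [log_mul hτ.ne' ha.ne', log_mul (by positivity) hτω.ne'] at this
    linarith

theorem log_sub_log_max_sub_of_le {a ω t : ℝ} (ht : t ≤ ω + a) :
    log t - log (max (t - ω) a) = log t - log a := by
  rw [max_eq_right (by linarith)]

end Real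

theorem optimal_detection_threshold
    (ς σ ω : ℝ) (hς : 1 < ς) (hσ : 0 < σ) (hω : 0 < ω)
    (f : ℝ → ℝ)
    (hf : ∀ τ, f τ = 1 - (Real.log τ - Real.log (max (τ - ω) (σ / ς))) / (2 * Real.log ς))
    (τstar : ℝ) (hτstar : τstar = min (ω + σ / ς) (ς * σ)) :
    ∀ τ, σ / ς ≤ τ → τ ≤ ς * σ → f τstar ≤ f τ := by
  intro τ hτ₁ hτ₂
  have ha : 0 < σ / ς := by positivity
  have hτ : 0 < τ := ha.trans_le hτ₁
  have hlogς : 0 < Real.log ς := Real.log_pos hς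
  rw [hf, hf]
  gcongr 1 - ?_ / _
  calc Real.log τ - Real.log (max (τ - ω) (σ / ς))
      ≤ Real.log (min τ (ω + σ / ς)) - Real.log (σ / ς) :=
        Real.log_sub_log_max_sub_le ha hω.le hτ
    _ ≤ Real.log τstar - Real.log (σ / ς) := by
        rw [hτstar, min_comm (ω + σ / ς)]
        gcongr
    _ = Real.log τstar - Real.log (max (τstar - ω) (σ / ς)) :=
        (Real.log_sub_log_max_sub_of_le (hτstar ▸ min_le_left _ _)).symm
end

section
/- Let ς > 1, σ > 0 and ω > 0 be real numbers. Define f(τ) = 1 − (log τ − log (max (τ − ω) (σ/ς))) / (2 · log ς) and τ* = min (ω + σ/ς) (ς·σ). If ω ≤ (ς² − 1)·σ/ς then f(τ*) = 1 − log(1 + ς·ω/σ) / (2 · log ς), and if ω > (ς² − 1)·σ/ς then f(τ*) = 0. -/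
open Real

/- Since `τ* ≤ ω + σ/ς`, the maximum in `f τ*` is always `σ/ς`, so `f τ* = 1 - log (τ*/(σ/ς)) / (2 log ς)`.
Below the threshold `τ* = ω + σ/ς` and the ratio is `1 + ςω/σ`; above it `τ* = ςσ`, the ratio is `ς²`
and `f τ* = 1 - 1 = 0`. -/

lemma sub_log_max_sub_eq_log_div {τ ω a : ℝ} (hτ : 0 < τ) (ha : 0 < a) (hle : τ ≤ ω + a) :
    log τ - log (max (τ - ω) a) = log (τ / a) := by
  rw [max_eq_right (by linarith), log_div hτ.ne' ha.ne']

lemma sq_sub_one_mul_div_eq {ς σ : ℝ} (hς : ς ≠ 0) :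
    (ς ^ 2 - 1) * σ / ς = ς * σ - σ / ς := by
  field_simp

theorem optimal_dep_value
    (ς σ ω : ℝ) (hς : 1 < ς) (hσ : 0 < σ) (hω : 0 < ω)
    (f : ℝ → ℝ)
    (hf : ∀ τ, f τ = 1 - (Real.log τ - Real.log (max (τ - ω) (σ / ς))) / (2 * Real.log ς))
    (τstar : ℝ) (hτstar : τstar = min (ω + σ / ς) (ς * σ)) :
    (ω ≤ (ς ^ 2 - 1) * σ / ς → f τstar = 1 - Real.log (1 + ς * ω / σ) / (2 * Real.log ς)) ∧
    (ω > (ς ^ 2 - 1) * σ / ς → f τstar = 0) := by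
  have hς0 : 0 < ς := one_pos.trans hς
  have hlow : 0 < σ / ς := div_pos hσ hς0
  have hτpos : 0 < τstar := hτstar ▸ lt_min (by linarith) (mul_pos hς0 hσ)
  have hf' : f τstar = 1 - log (τstar / (σ / ς)) / (2 * log ς) := by
    rw [hf, sub_log_max_sub_eq_log_div hτpos hlow (hτstar ▸ min_le_left _ _)]
  rw [sq_sub_one_mul_div_eq hς0.ne', hf']
  constructor
  · intro h
    rw [hτstar, min_eq_left (by linarith)]
    congr 3
    field_simp
    ring
  · intro h
    rw [hτstar, min_eq_right (by linarith),
      show ς * σ / (σ / ς) = ς ^ 2 by field_simp, log_pow, Nat.cast_ofNat,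
      div_self (mul_pos two_pos (log_pos hς)).ne', sub_self]
end

section
/- Let a, b ∈ ℝ, v > 0, and ψ > 0 with 2·ψ·v < 1. Then (1/ψ) · log ( ∫ exp(ψ·(x² + y²)) d((gaussianReal a v).prod (gaussianReal b v))(x, y) ) = (a² + b²) / (1 − 2·ψ·v) − log(1 − 2·ψ·v) / ψ, where gaussianReal μ v denotes the Gaussian probability measure on ℝ with mean μ and variance v and the integral is over the product measure on ℝ × ℝ. -/
open MeasureTheory ProbabilityTheory Real

/-!
With `c = 1 - 2ψv`, completing the square shows that `exp (ψ x²)` times the density of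
`N(μ, v)` is `exp (ψ μ² / c) / √c` times the density of `N(μ / c, v / c)`, so
`E[exp (ψ X²)] = exp (ψ μ² / c) / √c`. Under the product measure the integrand factorises,
and the logarithm of the product of the two factors is `ψ (a² + b²) / c - log c`.
-/

lemma exp_mul_sq_mul_gaussianPDFReal {ψ : ℝ} {v : NNReal} (hv : v ≠ 0)
    (h : 2 * ψ * (v : ℝ) < 1) (μ x : ℝ) :
    exp (ψ * x ^ 2) * gaussianPDFReal μ v x
      = exp (ψ * μ ^ 2 / (1 - 2 * ψ * v)) / √(1 - 2 * ψ * v)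
        * gaussianPDFReal (μ / (1 - 2 * ψ * v)) (v / (1 - 2 * ψ * v).toNNReal) x := by
  set c := 1 - 2 * ψ * (v : ℝ)
  have hc : 0 < c := by linarith
  have hv' : (0 : ℝ) < v := by positivity
  have hsqrt : √(2 * π * (v / c)) = √(2 * π * v) / √c := by
    rw [← Real.sqrt_div (by positivity), mul_div_assoc]
  have hexp : ψ * x ^ 2 + -(x - μ) ^ 2 / (2 * v)
      = ψ * μ ^ 2 / c + -(x - μ / c) ^ 2 / (2 * (v / c)) := by
    field_simp
    ring
  simp only [gaussianPDFReal, NNReal.coe_div, Real.coe_toNNReal _ hc.le, hsqrt]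
  rw [inv_div, mul_left_comm, ← exp_add, hexp, exp_add]
  field_simp

lemma integral_exp_mul_sq_gaussianReal {ψ : ℝ} {v : NNReal} (h : 2 * ψ * (v : ℝ) < 1) (μ : ℝ) :
    ∫ x, exp (ψ * x ^ 2) ∂gaussianReal μ v
      = exp (ψ * μ ^ 2 / (1 - 2 * ψ * v)) / √(1 - 2 * ψ * v) := by
  rcases eq_or_ne v 0 with rfl | hv
  · simp [gaussianReal_zero_var]
  have hc : (1 - 2 * ψ * v).toNNReal ≠ 0 := by simpa using h
  simp_rw [integral_gaussianReal_eq_integral_smul hv, smul_eq_mul, mul_comm (gaussianPDFReal _ _ _),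
    exp_mul_sq_mul_gaussianPDFReal hv h, integral_const_mul,
    integral_gaussianPDFReal_eq_one _ (div_ne_zero hv hc), mul_one]

theorem log_mgf_noncentral_chisq_two_general
    (a b : ℝ) (v : NNReal) (ψ : ℝ) (hψ : 0 < ψ)
    (h : 2 * ψ * (v : ℝ) < 1) :
    (1 / ψ) * Real.log (∫ p : ℝ × ℝ, Real.exp (ψ * (p.1 ^ 2 + p.2 ^ 2))
        ∂((gaussianReal a v).prod (gaussianReal b v)))
      = (a ^ 2 + b ^ 2) / (1 - 2 * ψ * (v : ℝ)) - Real.log (1 - 2 * ψ * (v : ℝ)) / ψ := by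
  have hc : 0 < 1 - 2 * ψ * (v : ℝ) := by linarith
  have hsqrt : 0 < √(1 - 2 * ψ * (v : ℝ)) := Real.sqrt_pos.mpr hc
  simp_rw [mul_add, exp_add]
  rw [integral_prod_mul (fun x ↦ exp (ψ * x ^ 2)) (fun y ↦ exp (ψ * y ^ 2)),
    integral_exp_mul_sq_gaussianReal h, integral_exp_mul_sq_gaussianReal h,
    div_mul_div_comm, ← exp_add, Real.log_div (exp_ne_zero _) (by positivity), log_exp,
    Real.log_mul hsqrt.ne' hsqrt.ne', Real.log_sqrt hc.le]
  field_simp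
  ring

theorem log_mgf_noncentral_chisq_two
    (a b : ℝ) (v : NNReal) (hv : 0 < v) (ψ : ℝ) (hψ : 0 < ψ)
    (h : 2 * ψ * (v : ℝ) < 1) :
    (1 / ψ) * Real.log (∫ p : ℝ × ℝ, Real.exp (ψ * (p.1 ^ 2 + p.2 ^ 2))
        ∂((gaussianReal a v).prod (gaussianReal b v)))
      = (a ^ 2 + b ^ 2) / (1 - 2 * ψ * (v : ℝ)) - Real.log (1 - 2 * ψ * (v : ℝ)) / ψ :=
  log_mgf_noncentral_chisq_two_general a b v ψ hψ h
end

section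
/- Let h ∈ ℂ, P > 0 and σ² > 0, and define E : ℂ → ℝ by E(u) = |√P · (conj u) · h − 1|² + σ² · |u|². Then log(1 + P·|h|²/σ²) = sup over W > 0 and u ∈ ℂ of (log W − W·E(u) + 1), and the supremum is attained at u* = √P·h/(P·|h|² + σ²) and W* = 1/E(u*). -/
/-!
Completing the square in `u` gives `E u = S * ‖u - u*‖ ^ 2 + σ2 / S` with `S = P‖h‖² + σ2`, so the
least mean-square error is `σ2 / S`. For a fixed error `c > 0`, `log x ≤ x - 1` applied to `x = W c`
gives `log W - W c + 1 ≤ -log c`, with equality at `W = 1 / c`; and `-log (σ2 / S)` is the rate.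
-/

open Real

noncomputable def mse (g : ℂ) (σ2 : ℝ) (u : ℂ) : ℝ :=
  ‖starRingEnd ℂ u * g - 1‖ ^ 2 + σ2 * ‖u‖ ^ 2

theorem mse_eq_mul_sq_add (g : ℂ) {σ2 : ℝ} (hS : ‖g‖ ^ 2 + σ2 ≠ 0) (u : ℂ) :
    mse g σ2 u = (‖g‖ ^ 2 + σ2) * ‖u - g / ((‖g‖ ^ 2 + σ2 : ℝ) : ℂ)‖ ^ 2
      + σ2 / (‖g‖ ^ 2 + σ2) := by
  have hg : ‖g‖ ^ 2 = g.re ^ 2 + g.im ^ 2 := by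
    rw [Complex.sq_norm, Complex.normSq_apply]; ring
  rw [hg] at hS ⊢
  simp only [mse, Complex.sq_norm, Complex.normSq_apply, Complex.sub_re, Complex.sub_im,
    Complex.mul_re, Complex.mul_im, Complex.conj_re, Complex.conj_im, Complex.one_re,
    Complex.one_im, Complex.div_ofReal_re, Complex.div_ofReal_im]
  field_simp
  ring

theorem isLeast_range_mse (g : ℂ) {σ2 : ℝ} (hσ : 0 < σ2) :
    IsLeast (Set.range (mse g σ2)) (σ2 / (‖g‖ ^ 2 + σ2)) := by
  have hS : 0 < ‖g‖ ^ 2 + σ2 := by positivity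
  refine ⟨⟨g / ((‖g‖ ^ 2 + σ2 : ℝ) : ℂ), ?_⟩, ?_⟩
  · simp [mse_eq_mul_sq_add g hS.ne']
  · rintro _ ⟨u, rfl⟩
    rw [mse_eq_mul_sq_add g hS.ne']
    exact le_add_of_nonneg_left (by positivity)

theorem log_sub_mul_add_one_le {c W : ℝ} (hc : 0 < c) (hW : 0 < W) :
    log W - W * c + 1 ≤ -log c := by
  have := log_le_sub_one_of_pos (mul_pos hW hc)
  rw [log_mul hW.ne' hc.ne'] at this
  linarith

theorem log_inv_sub_inv_mul_add_one {c : ℝ} (hc : c ≠ 0) :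
    log c⁻¹ - c⁻¹ * c + 1 = -log c := by
  rw [log_inv, inv_mul_cancel₀ hc]; ring

theorem isGreatest_log_sub_mul_add_one {α : Type*} {f : α → ℝ} {m : ℝ} (hm : 0 < m)
    (hf : IsLeast (Set.range f) m) :
    IsGreatest {y | ∃ W : ℝ, 0 < W ∧ ∃ x, y = log W - W * f x + 1} (-log m) := by
  obtain ⟨⟨x, hx⟩, hmin⟩ := hf
  refine ⟨⟨m⁻¹, inv_pos.2 hm, x, ?_⟩, ?_⟩
  · rw [hx, log_inv_sub_inv_mul_add_one hm.ne']
  · rintro _ ⟨W, hW, x, rfl⟩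
    calc log W - W * f x + 1 ≤ log W - W * m + 1 := by
          gcongr; exact hmin ⟨x, rfl⟩
      _ ≤ -log m := log_sub_mul_add_one_le hm hW

theorem wmmse_rate_reformulation
    (h : ℂ) (P σ2 : ℝ) (hP : 0 < P) (hσ : 0 < σ2)
    (E : ℂ → ℝ)
    (hE : ∀ u : ℂ, E u =
      ‖(Real.sqrt P : ℂ) * (starRingEnd ℂ u) * h - 1‖ ^ 2 +
        σ2 * ‖u‖ ^ 2)
    (ustar : ℂ) (hustar : ustar = (Real.sqrt P : ℂ) * h / ((P * ‖h‖ ^ 2 + σ2) : ℝ))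
    (Wstar : ℝ) (hWstar : Wstar = 1 / E ustar) :
    IsGreatest {y : ℝ | ∃ W : ℝ, 0 < W ∧ ∃ u : ℂ, y = Real.log W - W * E u + 1}
        (Real.log (1 + P * ‖h‖ ^ 2 / σ2)) ∧
      Real.log Wstar - Wstar * E ustar + 1 = Real.log (1 + P * ‖h‖ ^ 2 / σ2) := by
  set g : ℂ := (Real.sqrt P : ℂ) * h with hg_def
  have hg : ‖g‖ ^ 2 = P * ‖h‖ ^ 2 := by
    rw [norm_mul, mul_pow, Complex.norm_real, Real.norm_eq_abs, sq_abs, sq_sqrt hP.le]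
  have hE_mse : E = mse g σ2 :=
    funext fun u => by rw [hE, mse, hg_def, mul_left_comm, ← mul_assoc]
  have hrate : log (1 + P * ‖h‖ ^ 2 / σ2) = -log (σ2 / (P * ‖h‖ ^ 2 + σ2)) := by
    rw [← log_inv, inv_div, add_div, div_self hσ.ne', add_comm]
  have hEstar : E ustar = σ2 / (P * ‖h‖ ^ 2 + σ2) := by
    rw [hE_mse, hustar, ← hg, mse_eq_mul_sq_add g (by positivity)]
    simp
  have hmin := isLeast_range_mse g hσ
  rw [hg, ← hE_mse] at hmin
  refine ⟨hrate ▸ isGreatest_log_sub_mul_add_one (by positivity) hmin, ?_⟩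
  rw [hWstar, hEstar, one_div, log_inv_sub_inv_mul_add_one (by positivity), hrate]
end

section
/- Let ς > 1, σ > 0 and ω > 0, and let μ be the measure on ℝ with density x ↦ (Set.indicator (Set.Icc (σ/ς) (ς·σ)) (fun x => 1/(2·x·log ς))) x with respect to Lebesgue measure. Then for every τ with σ/ς ≤ τ ≤ ς·σ, μ {x | x > τ} + μ {x | x < τ − ω} = 1 − (log τ − log (max (τ − ω) (σ/ς))) / (2 · log ς). -/
/-! If `log X` is uniform on `[log σ - log ς, log σ + log ς]`, the mass of `X` between `t`
and `u` is `(log u - log t) / (2 log ς)`. The false alarm event `X > τ` and the (clipped) miss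
event `X < τ - ω` cover the support minus `[max (τ - ω) (σ / ς), τ]`, so their masses add up to
one minus the mass of that interval. -/

open MeasureTheory Set Real

lemma toReal_withDensity_ofReal_apply {α : Type*} [MeasurableSpace α] {ν : Measure α}
    {g : α → ℝ} (hg : 0 ≤ᵐ[ν] g) (hgm : AEStronglyMeasurable g ν) {s : Set α}
    (hs : MeasurableSet s) :
    (ν.withDensity (fun x => ENNReal.ofReal (g x)) s).toReal = ∫ x in s, g x ∂ν := by
  rw [withDensity_apply _ hs,
    integral_eq_lintegral_of_nonneg_ae (ae_restrict_of_ae hg) hgm.restrict]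

lemma integral_one_div_two_mul_mul {t u : ℝ} (ht : 0 < t) (hu : 0 < u) (c : ℝ) :
    ∫ x in t..u, 1 / (2 * x * c) = (log u - log t) / (2 * c) := by
  have hzero : (0 : ℝ) ∉ uIcc t u := fun h => (lt_min ht hu).not_ge (by simpa using h.1)
  simp_rw [show ∀ x : ℝ, 1 / (2 * x * c) = (2 * c)⁻¹ * x⁻¹ from fun x => by ring]
  rw [intervalIntegral.integral_const_mul, integral_inv hzero, log_div hu.ne' ht.ne']
  ring

/-- For `2 * c = log (b / a)` this is the law of `X` when `log X` is uniform on `[log a, log b]`. -/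
noncomputable def logUniform (a b c : ℝ) : Measure ℝ :=
  volume.withDensity fun x => ENNReal.ofReal ((Icc a b).indicator (fun x => 1 / (2 * x * c)) x)

namespace logUniform

variable {a b c : ℝ}

lemma toReal_apply (ha : 0 < a) (hc : 0 ≤ c) {s : Set ℝ} (hs : MeasurableSet s) :
    (logUniform a b c s).toReal = ∫ x in s ∩ Icc a b, 1 / (2 * x * c) := by
  have hnonneg : 0 ≤ (Icc a b).indicator (fun x => 1 / (2 * x * c)) := by
    refine indicator_nonneg fun x hx => ?_
    have : 0 < x := ha.trans_le hx.1
    positivity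
  have hmeas : Measurable ((Icc a b).indicator (fun x : ℝ => 1 / (2 * x * c))) :=
    (by fun_prop : Measurable fun x : ℝ => 1 / (2 * x * c)).indicator measurableSet_Icc
  rw [logUniform, toReal_withDensity_ofReal_apply (ae_of_all _ hnonneg)
    hmeas.aestronglyMeasurable hs, setIntegral_indicator measurableSet_Icc]

lemma toReal_apply_gt (ha : 0 < a) (hc : 0 ≤ c) {τ : ℝ} (haτ : a ≤ τ) (hτb : τ ≤ b) :
    (logUniform a b c {x | x > τ}).toReal = (log b - log τ) / (2 * c) := by
  have hset : {x | x > τ} ∩ Icc a b = Ioc τ b := by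
    ext x
    simp only [mem_inter_iff, mem_ofPred_eq, mem_Icc, mem_Ioc]
    constructor
    · rintro ⟨hτx, -, hxb⟩
      exact ⟨hτx, hxb⟩
    · rintro ⟨hτx, hxb⟩
      exact ⟨hτx, haτ.trans hτx.le, hxb⟩
  rw [toReal_apply (s := {x | x > τ}) ha hc measurableSet_Ioi, hset,
    ← intervalIntegral.integral_of_le hτb,
    integral_one_div_two_mul_mul (ha.trans_le haτ) (ha.trans_le (haτ.trans hτb))]

lemma toReal_apply_lt (ha : 0 < a) (hc : 0 ≤ c) {t : ℝ} (htb : t ≤ b) :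
    (logUniform a b c {x | x < t}).toReal = (log (max t a) - log a) / (2 * c) := by
  have hset : {x | x < t} ∩ Icc a b = Ico a (max t a) := by
    ext x
    simp only [mem_inter_iff, mem_ofPred_eq, mem_Icc, mem_Ico, lt_max_iff]
    constructor
    · rintro ⟨hxt, hax, -⟩
      exact ⟨hax, Or.inl hxt⟩
    · rintro ⟨hax, hxt | hxa⟩
      · exact ⟨hxt, hax, by linarith⟩
      · linarith
  rw [toReal_apply (s := {x | x < t}) ha hc measurableSet_Iio, hset,
    setIntegral_congr_set Ico_ae_eq_Ioc,
    ← intervalIntegral.integral_of_le (le_max_right t a),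
    integral_one_div_two_mul_mul ha (ha.trans_le (le_max_right t a))]

end logUniform

theorem dep_as_measure_of_error_events
    (ς σ ω : ℝ) (hς : 1 < ς) (hσ : 0 < σ) (hω : 0 < ω)
    (μ : Measure ℝ)
    (hμ : μ = volume.withDensity (fun x =>
      ENNReal.ofReal ((Set.Icc (σ / ς) (ς * σ)).indicator
        (fun x => 1 / (2 * x * Real.log ς)) x))) :
    ∀ τ : ℝ, σ / ς ≤ τ → τ ≤ ς * σ →
      (μ {x | x > τ}).toReal + (μ {x | x < τ - ω}).toReal
        = 1 - (Real.log τ - Real.log (max (τ - ω) (σ / ς))) / (2 * Real.log ς) := by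
  intro τ hτ hτ'
  have hς0 : 0 < ς := one_pos.trans hς
  have hlog : 0 < log ς := log_pos hς
  have ha : 0 < σ / ς := div_pos hσ hς0
  change μ = logUniform (σ / ς) (ς * σ) (log ς) at hμ
  rw [hμ, logUniform.toReal_apply_gt ha hlog.le hτ hτ',
    logUniform.toReal_apply_lt ha hlog.le (by linarith), log_mul hς0.ne' hσ.ne',
    log_div hσ.ne' hς0.ne']
  field_simp
  ring
end
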